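/- Let V ∈ ℂ^{n×n} be Hermitian positive semidefinite, h(U) = Re(trace(U^H V U)) on St(r,n,ℂ), and let U_* ∈ St(r,n,ℂ) be a stationary point of h. Then for every tangent vector Z ∈ T_{U_*}St(r,n,ℂ), the Riemannian Hessian satisfies Hess h(U_*)[Z] = 2(I_n − U_* U_*^H) V Z − 2(Z U_*^H + U_* Z^H) V U_*. -/

import Mathlib

/-!
Stationarity says that the Euclidean gradient `2 V U_*` is normal to the Stiefel manifold, so
`Proj⊥ ∇h(U_*) = 2 V U_*`. Substituting this into the Weingarten term and expanding both
symmetric parts with `Vᴴ = V` leaves a linear identity between the products of `U_*`, `Z`, `V`.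
-/

open Matrix

noncomputable section

/-- Hermitian part `sym(A) = (A + Aᴴ)/2`. -/
def symPart {r : ℕ} (A : Matrix (Fin r) (Fin r) ℂ) : Matrix (Fin r) (Fin r) ℂ :=
  (1 / 2 : ℂ) • (A + Aᴴ)

/-- Projection onto the tangent space of the Stiefel manifold at `U`. -/
def stiefelProj {n r : ℕ} (U Z : Matrix (Fin n) (Fin r) ℂ) : Matrix (Fin n) (Fin r) ℂ :=
  Z - U * symPart (Uᴴ * Z)

/-- Weingarten operator of the Stiefel manifold. -/
def weingarten {n r : ℕ} (U Z V : Matrix (Fin n) (Fin r) ℂ) : Matrix (Fin n) (Fin r) ℂ :=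
  -(Z * (Uᴴ * V)) - U * symPart (Zᴴ * V)

/-- The tangent space to the Stiefel manifold at `U`, as a real submodule of
`ℂ^{n×r}`. -/
def stiefelTangent {n r : ℕ} (U : Matrix (Fin n) (Fin r) ℂ) :
    Submodule ℝ (Matrix (Fin n) (Fin r) ℂ) where
  carrier := {Z | Uᴴ * Z + Zᴴ * U = 0}
  zero_mem' := by simp
  add_mem' := by
    intro a b ha hb
    simp only [Set.mem_setOf_eq] at ha hb ⊢
    have : Uᴴ * (a + b) + (a + b)ᴴ * U = (Uᴴ * a + aᴴ * U) + (Uᴴ * b + bᴴ * U) := by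
      rw [Matrix.conjTranspose_add, Matrix.mul_add, Matrix.add_mul]; abel
    rw [this, ha, hb, add_zero]
  smul_mem' := by
    intro c Z hZ
    simp only [Set.mem_setOf_eq] at hZ ⊢
    have : Uᴴ * (c • Z) + (c • Z)ᴴ * U = c • (Uᴴ * Z + Zᴴ * U) := by
      rw [Matrix.conjTranspose_smul, star_trivial, Matrix.mul_smul, Matrix.smul_mul, smul_add]
    rw [this, hZ, smul_zero]

namespace Stiefel

variable {n r : ℕ}

theorem symPart_conjTranspose_mul_two_smul {V : Matrix (Fin n) (Fin n) ℂ} (hV : V.IsHermitian)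
    (A B : Matrix (Fin n) (Fin r) ℂ) :
    symPart (Aᴴ * ((2 : ℂ) • (V * B))) = Aᴴ * V * B + Bᴴ * V * A := by
  have hsym : (Aᴴ * (V * B))ᴴ = Bᴴ * V * A := by
    rw [conjTranspose_mul, conjTranspose_mul, hV.eq, conjTranspose_conjTranspose, Matrix.mul_assoc]
  rw [symPart, Matrix.mul_smul, conjTranspose_smul, star_ofNat, ← smul_add, smul_smul, hsym,
    Matrix.mul_assoc]
  norm_num [Matrix.mul_assoc]

theorem stiefelProj_two_smul_mul {V : Matrix (Fin n) (Fin n) ℂ} (hV : V.IsHermitian)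
    (U Z : Matrix (Fin n) (Fin r) ℂ) :
    stiefelProj U ((2 : ℂ) • (V * Z)) = (2 : ℂ) • (V * Z) - U * Uᴴ * V * Z - U * Zᴴ * V * U := by
  rw [stiefelProj, symPart_conjTranspose_mul_two_smul hV]
  simp only [Matrix.mul_add, Matrix.mul_assoc, sub_sub]

theorem weingarten_two_smul_mul {V : Matrix (Fin n) (Fin n) ℂ} (hV : V.IsHermitian)
    (U Z : Matrix (Fin n) (Fin r) ℂ) :
    weingarten U Z ((2 : ℂ) • (V * U)) =
      -((2 : ℂ) • (Z * Uᴴ * V * U)) - U * Zᴴ * V * U - U * Uᴴ * V * Z := by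
  rw [weingarten, symPart_conjTranspose_mul_two_smul hV]
  simp only [Matrix.mul_add, Matrix.mul_smul, Matrix.mul_assoc, sub_sub]

theorem mul_symPart_eq_of_stiefelProj_eq_zero {U G : Matrix (Fin n) (Fin r) ℂ}
    (h : stiefelProj U G = 0) : U * symPart (Uᴴ * G) = G :=
  (sub_eq_zero.mp h).symm

end Stiefel

open ComplexOrder

theorem hessian_formula_compression_general (n r : ℕ)
    (V : Matrix (Fin n) (Fin n) ℂ) (hV : V.PosSemidef)
    (Ustar : Matrix (Fin n) (Fin r) ℂ)
    (hstat : (2 : ℂ) • (V * Ustar) -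
      Ustar * symPart (Ustarᴴ * ((2 : ℂ) • (V * Ustar))) = 0) :
    ∀ Z : Matrix (Fin n) (Fin r) ℂ, Ustarᴴ * Z + Zᴴ * Ustar = 0 →
      stiefelProj Ustar ((2 : ℂ) • (V * Z)) +
          weingarten Ustar Z (Ustar * symPart (Ustarᴴ * ((2 : ℂ) • (V * Ustar)))) =
        (2 : ℂ) • ((1 - Ustar * Ustarᴴ) * V * Z) -
          (2 : ℂ) • ((Z * Ustarᴴ + Ustar * Zᴴ) * V * Ustar) := by
  intro Z _
  rw [Stiefel.mul_symPart_eq_of_stiefelProj_eq_zero hstat,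
    Stiefel.stiefelProj_two_smul_mul hV.isHermitian, Stiefel.weingarten_two_smul_mul hV.isHermitian]
  simp only [Matrix.sub_mul, Matrix.add_mul, Matrix.one_mul]
  module

/-- For `h(U) = Re(trace(Uᴴ V U))` with `V` Hermitian positive semidefinite
(so `∇h(U) = 2VU` and `∇²h(U)[Z] = 2VZ`), at a stationary point `U_*` the
Riemannian Hessian
`Hess h(U_*)[Z] = Proj_{U_*}(∇²h(U_*)[Z]) + A_{U_*}(Z, Proj⊥_{U_*}∇h(U_*))`
equals `2(I − U_* U_*ᴴ)VZ − 2(Z U_*ᴴ + U_* Zᴴ)V U_*` on every tangent vector. -/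
theorem hessian_formula_compression (n r : ℕ)
    (V : Matrix (Fin n) (Fin n) ℂ) (hV : V.PosSemidef)
    (Ustar : Matrix (Fin n) (Fin r) ℂ) (hU : Ustarᴴ * Ustar = 1)
    (hstat : (2 : ℂ) • (V * Ustar) -
      Ustar * symPart (Ustarᴴ * ((2 : ℂ) • (V * Ustar))) = 0) :
    ∀ Z : Matrix (Fin n) (Fin r) ℂ, Ustarᴴ * Z + Zᴴ * Ustar = 0 →
      stiefelProj Ustar ((2 : ℂ) • (V * Z)) +
          weingarten Ustar Z (Ustar * symPart (Ustarᴴ * ((2 : ℂ) • (V * Ustar)))) =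
        (2 : ℂ) • ((1 - Ustar * Ustarᴴ) * V * Z) -
          (2 : ℂ) • ((Z * Ustarᴴ + Ustar * Zᴴ) * V * Ustar) :=
  hessian_formula_compression_general n r V hV Ustar hstat

end
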